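/- (Extremal solutions of Peano's example.) Every differentiable function φ : ℝ → ℝ with φ(0) = 0 and φ'(t) = 3·|φ(t)|^{2/3} for all t ∈ ℝ satisfies min{t, 0}^3 ≤ φ(t) ≤ max{t, 0}^3 for all t ∈ ℝ; that is, the function which equals t^3 for t < 0 and 0 for t ≥ 0 is the least solution, and the function which equals 0 for t < 0 and t^3 for t ≥ 0 is the greatest solution, of the problem y' = 3|y|^{2/3}, y(0) = 0 on ℝ. -/

import Mathlib

/-!
A solution is nondecreasing, which gives the trivial halves of both bounds. For `t ≥ 0`, compare
`φ` with `((1 + ε) (t + ε))³`: its derivative is `1 + ε` times `3 |·|^{2/3}` of itself, so it is a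
strict supersolution starting above `φ 0 = 0`, and the fencing theorem keeps `φ` below it; letting
`ε → 0` gives `φ t ≤ t³`. Since `t ↦ -φ (-t)` is again a solution, this also gives `t³ ≤ φ t` for
`t ≤ 0`.
-/

open Set

lemma abs_cube_rpow_two_thirds (x : ℝ) : |x ^ 3| ^ ((2 : ℝ) / 3) = x ^ 2 := by
  rw [abs_pow, ← Real.rpow_natCast, ← Real.rpow_mul (abs_nonneg x)]
  norm_num

section Subsolution

variable {φ φ' : ℝ → ℝ} {a : ℝ}

lemma le_one_add_mul_sub_add_cube_of_hasDerivAt_le_rpow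
    (hφ : ∀ t, HasDerivAt φ (φ' t) t) (hle : ∀ t, φ' t ≤ 3 * |φ t| ^ ((2 : ℝ) / 3))
    (ha : φ a ≤ 0) {ε : ℝ} (hε : 0 < ε) {t : ℝ} (ht : a ≤ t) :
    φ t ≤ ((1 + ε) * (t - a + ε)) ^ 3 := by
  set B : ℝ → ℝ := fun s => ((1 + ε) * (s - a + ε)) ^ 3
  have hB : ∀ s, HasDerivAt B (3 * (1 + ε) ^ 3 * (s - a + ε) ^ 2) s := fun s =>
    ((((hasDerivAt_id' s).sub_const a).add_const ε).const_mul (1 + ε)).fun_pow 3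
      |>.congr_deriv (by ring)
  have hBa : 0 ≤ B a := pow_nonneg (mul_nonneg (by linarith) (by linarith)) 3
  refine image_le_of_deriv_right_lt_deriv_boundary (f' := φ') (b := t)
    (fun s _ => (hφ s).continuousAt.continuousWithinAt) (fun s _ => (hφ s).hasDerivWithinAt)
    (ha.trans hBa) hB (fun s hs hs_eq => ?_) ⟨ht, le_rfl⟩
  have hpos : 0 < s - a + ε := by linarith [hs.1]
  calc φ' s ≤ 3 * |B s| ^ ((2 : ℝ) / 3) := hs_eq ▸ hle s
    _ = 3 * (1 + ε) ^ 2 * (s - a + ε) ^ 2 := by rw [abs_cube_rpow_two_thirds]; ring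
    _ < 3 * (1 + ε) ^ 3 * (s - a + ε) ^ 2 := by gcongr <;> linarith

lemma le_sub_cube_of_hasDerivAt_le_rpow
    (hφ : ∀ t, HasDerivAt φ (φ' t) t) (hle : ∀ t, φ' t ≤ 3 * |φ t| ^ ((2 : ℝ) / 3))
    (ha : φ a ≤ 0) {t : ℝ} (ht : a ≤ t) : φ t ≤ (t - a) ^ 3 := by
  have hcont : ContinuousWithinAt (fun ε : ℝ => ((1 + ε) * (t - a + ε)) ^ 3) (Ioi 0) 0 := by
    fun_prop
  refine ge_of_tendsto (by simpa using hcont.tendsto) ?_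
  filter_upwards [self_mem_nhdsWithin] with ε hε
  exact le_one_add_mul_sub_add_cube_of_hasDerivAt_le_rpow hφ hle ha hε ht

end Subsolution

lemma hasDerivAt_neg_comp_neg_of_even {φ : ℝ → ℝ} (F : ℝ → ℝ) (hF : ∀ x, F (-x) = F x)
    (hφ : ∀ t, HasDerivAt φ (F (φ t)) t) (t : ℝ) :
    HasDerivAt (fun s => -φ (-s)) (F (-φ (-t))) t :=
  ((hφ (-t)).comp t (hasDerivAt_neg t)).fun_neg.congr_deriv (by rw [hF]; ring)

theorem peano_example_extremal (φ : ℝ → ℝ)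
    (hdiff : Differentiable ℝ φ) (h0 : φ 0 = 0)
    (hode : ∀ t : ℝ, deriv φ t = 3 * |φ t| ^ ((2 : ℝ) / 3)) :
    ∀ t : ℝ, (min t 0) ^ 3 ≤ φ t ∧ φ t ≤ (max t 0) ^ 3 := by
  have hφ : ∀ t, HasDerivAt φ (3 * |φ t| ^ ((2 : ℝ) / 3)) t :=
    fun t => hode t ▸ (hdiff t).hasDerivAt
  have hmono : Monotone φ := monotone_of_hasDerivAt_nonneg hφ fun t => by positivity
  have hupper : ∀ t, 0 ≤ t → φ t ≤ t ^ 3 := fun t ht => by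
    simpa using le_sub_cube_of_hasDerivAt_le_rpow hφ (fun _ => le_rfl) h0.le ht
  have hlower : ∀ t, t ≤ 0 → t ^ 3 ≤ φ t := fun t ht => by
    have hψ := hasDerivAt_neg_comp_neg_of_even (fun y => 3 * |y| ^ ((2 : ℝ) / 3))
      (fun y => by rw [abs_neg]) hφ
    have := le_sub_cube_of_hasDerivAt_le_rpow hψ (fun _ => le_rfl) (by simp [h0])
      (neg_nonneg.mpr ht)
    simp only [neg_neg, sub_zero] at this
    linarith [Odd.neg_pow (by decide : Odd 3) t]
  intro t
  rcases le_total 0 t with ht | ht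
  · simpa [ht] using ⟨h0 ▸ hmono ht, hupper t ht⟩
  · simpa [ht] using ⟨hlower t ht, h0 ▸ hmono ht⟩
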